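/- arXiv:2509.05586 — 3 statements merged into one kernel-verified Lean document; each statement's English description precedes it below -/
import Mathlib

section
/- Let (V, ≤) be a linear order. The priority-queue specification — the set of finite sequences over the symbols enq(v) and deq(v) (v ∈ V) executable on an initially empty finite multiset over V, where enq(v) inserts v into the multiset, and deq(v) is enabled only if v is a maximum element of the current multiset and removes one copy of v — is anagram-agnostic. -/
/-- τ1 ∼ τ2 : the two sequences admit exactly the same legal continuations. -/
def SpecEquiv {A : Type} (T : Set (List A)) (τ1 τ2 : List A) : Prop :=
  ∀ τ' : List A, τ1 ++ τ' ∈ T ↔ τ2 ++ τ' ∈ T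

/-- A specification is anagram-agnostic if any two of its members that are
permutations of one another (anagrams) are equivalent. -/
def AnagramAgnostic {A : Type} (T : Set (List A)) : Prop :=
  ∀ τ1 ∈ T, ∀ τ2 ∈ T, τ1.Perm τ2 → SpecEquiv T τ1 τ2

inductive PQOp (V : Type) : Type
  | enq (v : V) : PQOp V
  | deq (v : V) : PQOp V

/-- Execution of priority-queue sequences on a finite multiset: `enq v` inserts
`v`; `deq v` is enabled only if `v` is a maximum element of the multiset and
removes one copy of it. -/
inductive PQExec {V : Type} [LinearOrder V] : Multiset V → List (PQOp V) → Multiset V → Prop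
  | nil (s : Multiset V) : PQExec s [] s
  | enq {s s' : Multiset V} {w : List (PQOp V)} (v : V) :
      PQExec (v ::ₘ s) w s' → PQExec s (PQOp.enq v :: w) s'
  | deq {s s' : Multiset V} {w : List (PQOp V)} (v : V) :
      v ∈ s → (∀ u ∈ s, u ≤ v) → PQExec (s.erase v) w s' →
      PQExec s (PQOp.deq v :: w) s'

/-- The priority-queue specification: the sequences executable from the empty
multiset. -/
def PQSpec (V : Type) [LinearOrder V] : Set (List (PQOp V)) :=
  {w | ∃ s : Multiset V, PQExec 0 w s}

/-!
The state reached by a priority-queue execution is determined by the multisets of enqueued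
and dequeued values: it is the initial state plus the former minus the latter. Anagrams have
the same such multisets, so two anagrams in the specification lead to the same state, and since
execution is deterministic, the legal continuations of a sequence depend only on that state.
-/

namespace PQOp

variable {V : Type}

def enqValue? : PQOp V → Option V
  | enq v => some v
  | deq _ => none

def deqValue? : PQOp V → Option V
  | enq _ => none
  | deq v => some v

end PQOp

def enqueued {V : Type} (w : List (PQOp V)) : Multiset V :=
  w.filterMap PQOp.enqValue?

def dequeued {V : Type} (w : List (PQOp V)) : Multiset V :=
  w.filterMap PQOp.deqValue?

namespace PQExec

variable {V : Type} [LinearOrder V]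

theorem unique {s t₁ t₂ : Multiset V} {w : List (PQOp V)}
    (h₁ : PQExec s w t₁) (h₂ : PQExec s w t₂) : t₁ = t₂ := by
  induction h₁ generalizing t₂ with
  | nil => cases h₂; rfl
  | enq v _ ih => cases h₂ with | enq _ h => exact ih h
  | deq v _ _ _ ih => cases h₂ with | deq _ _ _ h => exact ih h

theorem append_iff {s u : Multiset V} {w₁ w₂ : List (PQOp V)} :
    PQExec s (w₁ ++ w₂) u ↔ ∃ t, PQExec s w₁ t ∧ PQExec t w₂ u := by
  constructor
  · intro h
    induction w₁ generalizing s with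
    | nil => exact ⟨s, nil s, h⟩
    | cons o w₁ ih =>
      cases h with
      | enq v h =>
        obtain ⟨t, h₁, h₂⟩ := ih h
        exact ⟨t, enq v h₁, h₂⟩
      | deq v hmem hmax h =>
        obtain ⟨t, h₁, h₂⟩ := ih h
        exact ⟨t, deq v hmem hmax h₁, h₂⟩
  · rintro ⟨t, h₁, h₂⟩
    induction h₁ with
    | nil => exact h₂
    | enq v _ ih => exact enq v (ih h₂)
    | deq v hmem hmax _ ih => exact deq v hmem hmax (ih h₂)

theorem add_dequeued {s t : Multiset V} {w : List (PQOp V)} (h : PQExec s w t) :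
    t + dequeued w = s + enqueued w := by
  induction h with
  | nil => simp [enqueued, dequeued]
  | enq v _ ih =>
    simp only [enqueued, dequeued, List.filterMap_cons, PQOp.enqValue?, PQOp.deqValue?,
      ← Multiset.cons_coe] at *
    rw [ih, Multiset.cons_add, Multiset.add_cons]
  | deq v hmem _ _ ih =>
    simp only [enqueued, dequeued, List.filterMap_cons, PQOp.enqValue?, PQOp.deqValue?,
      ← Multiset.cons_coe] at *
    rw [Multiset.add_cons, ih, ← Multiset.cons_add, Multiset.cons_erase hmem]

theorem eq_of_perm {s t₁ t₂ : Multiset V} {w₁ w₂ : List (PQOp V)}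
    (h₁ : PQExec s w₁ t₁) (h₂ : PQExec s w₂ t₂) (hw : w₁.Perm w₂) : t₁ = t₂ := by
  have henq : enqueued w₁ = enqueued w₂ := Multiset.coe_eq_coe.mpr (hw.filterMap _)
  have hdeq : dequeued w₁ = dequeued w₂ := Multiset.coe_eq_coe.mpr (hw.filterMap _)
  apply add_right_cancel (b := dequeued w₁)
  rw [h₁.add_dequeued, henq, hdeq, h₂.add_dequeued]

theorem append_mem_pqSpec_iff {t : Multiset V} {w w' : List (PQOp V)} (h : PQExec 0 w t) :
    w ++ w' ∈ PQSpec V ↔ ∃ u, PQExec t w' u := by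
  simp only [PQSpec, Set.mem_ofPred_eq, append_iff]
  constructor
  · rintro ⟨u, t', hw, hw'⟩
    exact ⟨u, hw.unique h ▸ hw'⟩
  · rintro ⟨u, hw'⟩
    exact ⟨u, t, h, hw'⟩

end PQExec

theorem stmt7 (V : Type) [LinearOrder V] : AnagramAgnostic (PQSpec V) := by
  rintro τ₁ ⟨t₁, h₁⟩ τ₂ ⟨t₂, h₂⟩ hperm τ'
  obtain rfl : t₁ = t₂ := h₁.eq_of_perm h₂ hperm
  rw [h₁.append_mem_pqSpec_iff, h₂.append_mem_pqSpec_iff]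
end

section
/- The read-modify-write register specification — the set of finite sequences over the symbols rmw(u, v) (u, v ∈ ℤ) executable on a register initialized to 0, where rmw(u, v) is enabled only if the current register value equals u and sets the register to v — is anagram-agnostic. -/
/-- Execution of read-modify-write sequences: `(u, v)` (i.e. `rmw(u, v)`) is
enabled only if the current register value is `u` and sets it to `v`. -/
inductive RMWExec : ℤ → List (ℤ × ℤ) → ℤ → Prop
  | nil (r : ℤ) : RMWExec r [] r
  | step {v r : ℤ} {w : List (ℤ × ℤ)} (u : ℤ) :
      RMWExec v w r → RMWExec u ((u, v) :: w) r

/-- The rmw register specification: the sequences executable on a register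
initialized to `0`. -/
def RMWSpec : Set (List (ℤ × ℤ)) :=
  {w | ∃ r : ℤ, RMWExec 0 w r}

/-! In every execution each value is entered as often as it is left, except that the initial
value is entered once more and the final value left once more. Hence the final value of an
execution from a fixed initial value is determined by the multiset of its operations, so two
anagrams in the specification reach the same register value and admit the same continuations. -/

namespace RMWExec

theorem append_iff {s r : ℤ} {w₁ w₂ : List (ℤ × ℤ)} :
    RMWExec s (w₁ ++ w₂) r ↔ ∃ m, RMWExec s w₁ m ∧ RMWExec m w₂ r := by
  induction w₁ generalizing s with
  | nil =>
    refine ⟨fun h => ⟨s, nil s, h⟩, ?_⟩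
    rintro ⟨m, ⟨⟩, h⟩
    exact h
  | cons a w ih =>
    constructor
    · rintro (_ | ⟨_, h⟩)
      obtain ⟨m, h₁, h₂⟩ := ih.mp h
      exact ⟨m, step _ h₁, h₂⟩
    · rintro ⟨m, _ | ⟨_, h₁⟩, h₂⟩
      exact step _ (ih.mpr ⟨m, h₁, h₂⟩)

theorem cons_map_snd_perm_cons_map_fst {s r : ℤ} {w : List (ℤ × ℤ)} (h : RMWExec s w r) :
    (s :: w.map Prod.snd).Perm (r :: w.map Prod.fst) := by
  induction h with
  | nil r => rfl
  | step u _ ih => exact (ih.cons u).trans (.swap _ _ _)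

open List in
theorem final_eq_of_perm {s r₁ r₂ : ℤ} {w₁ w₂ : List (ℤ × ℤ)} (hw : w₁.Perm w₂)
    (h₁ : RMWExec s w₁ r₁) (h₂ : RMWExec s w₂ r₂) : r₁ = r₂ := by
  have hperm : r₁ :: w₁.map Prod.fst ~ r₂ :: w₁.map Prod.fst :=
    calc r₁ :: w₁.map Prod.fst
        _ ~ s :: w₁.map Prod.snd := h₁.cons_map_snd_perm_cons_map_fst.symm
        _ ~ s :: w₂.map Prod.snd := (hw.map _).cons s
        _ ~ r₂ :: w₂.map Prod.fst := h₂.cons_map_snd_perm_cons_map_fst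
        _ ~ r₂ :: w₁.map Prod.fst := (hw.map _).symm.cons r₂
  exact (Multiset.cons_inj_left (w₁.map Prod.fst : Multiset ℤ)).mp
    (Multiset.coe_eq_coe.mpr hperm)

end RMWExec

theorem append_mem_rmwSpec_iff {τ τ' : List (ℤ × ℤ)} {r : ℤ} (h : RMWExec 0 τ r) :
    τ ++ τ' ∈ RMWSpec ↔ ∃ r', RMWExec r τ' r' := by
  constructor
  · rintro ⟨r', h'⟩
    obtain ⟨m, hm, h'⟩ := RMWExec.append_iff.mp h'
    exact ⟨r', RMWExec.final_eq_of_perm (.refl τ) hm h ▸ h'⟩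
  · rintro ⟨r', h'⟩
    exact ⟨r', RMWExec.append_iff.mpr ⟨r, h, h'⟩⟩

theorem stmt8 : AnagramAgnostic RMWSpec := by
  rintro τ₁ ⟨r₁, h₁⟩ τ₂ ⟨r₂, h₂⟩ hτ τ'
  rw [append_mem_rmwSpec_iff h₁, append_mem_rmwSpec_iff h₂,
    RMWExec.final_eq_of_perm hτ h₁ h₂]
end

section
/- Fix a value set V. The size-aware stack specification — the set of finite sequences over the symbols push(v, s) and pop(v, s) (v ∈ V, s ∈ ℕ) executable on an initially empty stack (a finite list), where push(v, s) is enabled only if the current stack size equals s − 1 and pushes v onto the stack (so the resulting size is s), and pop(v, s) is enabled only if the top of the stack is v and the current size equals s + 1 and removes the top (so the resulting size is s) — is anagram-agnostic. -/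
inductive SizeStackOp (V : Type) : Type
  | push (v : V) (s : ℕ) : SizeStackOp V
  | pop (v : V) (s : ℕ) : SizeStackOp V

/-- Execution of size-aware stack sequences on a stack (finite list):
`push v s` is enabled only if the current size is `s - 1` and pushes `v`
(so the resulting size is `s`); `pop v s` is enabled only if the top is `v`
and the current size is `s + 1`, and removes the top (resulting size `s`). -/
inductive SizeStackExec {V : Type} : List V → List (SizeStackOp V) → List V → Prop
  | nil (σ : List V) : SizeStackExec σ [] σ
  | push {σ σ' : List V} {w : List (SizeStackOp V)} (v : V) (s : ℕ) :
      s = σ.length + 1 → SizeStackExec (v :: σ) w σ' →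
      SizeStackExec σ (SizeStackOp.push v s :: w) σ'
  | pop {σ σ' : List V} {w : List (SizeStackOp V)} (v : V) (s : ℕ) :
      σ.length = s → SizeStackExec σ w σ' →
      SizeStackExec (v :: σ) (SizeStackOp.pop v s :: w) σ'

/-- The size-aware stack specification: the sequences executable from the
empty stack. -/
def SizeStackSpec (V : Type) : Set (List (SizeStackOp V)) :=
  {w | ∃ σ : List V, SizeStackExec [] w σ}

namespace Stmt9Aux

variable {V : Type}

def pushAt (h : ℕ) : SizeStackOp V → Option V
  | .push v s => if s = h then some v else none
  | .pop _ _ => none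

def popAt (h : ℕ) : SizeStackOp V → Option V
  | .pop v s => if s + 1 = h then some v else none
  | .push _ _ => none

def stMS : List V → ℕ → Multiset V
  | [], _ => 0
  | (v :: σ), h => (if h = σ.length + 1 then {v} else 0) + stMS σ h

lemma stMS_gt : ∀ {σ : List V} {h : ℕ}, σ.length < h → stMS σ h = 0 := by
  intro σ
  induction σ with
  | nil => intro h _; rfl
  | cons a t ih =>
    intro h hh
    simp only [List.length_cons] at hh
    have h1 : h ≠ t.length + 1 := by omega
    simp [stMS, h1, ih (show t.length < h by omega)]

lemma stMS_ext : ∀ {σ1 σ2 : List V}, (∀ h, stMS σ1 h = stMS σ2 h) → σ1 = σ2 := by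
  intro σ1
  induction σ1 with
  | nil =>
    intro σ2 hst
    cases σ2 with
    | nil => rfl
    | cons b t2 =>
      have := hst (t2.length + 1)
      simp [stMS, stMS_gt (Nat.lt_succ_self _)] at this
  | cons a t1 ih =>
    intro σ2 hst
    cases σ2 with
    | nil =>
      have := hst (t1.length + 1)
      simp [stMS, stMS_gt (Nat.lt_succ_self _)] at this
    | cons b t2 =>
      have hlen : t1.length = t2.length := by
        by_contra hne
        rcases Nat.lt_or_ge t1.length t2.length with hlt | hge
        · have := hst (t2.length + 1)
          have h1 : t2.length + 1 ≠ t1.length + 1 := by omega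
          simp [stMS, h1, hne, Ne.symm hne, stMS_gt (show t1.length < t2.length + 1 by omega),
            stMS_gt (Nat.lt_succ_self t2.length)] at this
        · have hlt : t2.length < t1.length := by omega
          have := hst (t1.length + 1)
          have h1 : t1.length + 1 ≠ t2.length + 1 := by omega
          simp [stMS, h1, hne, Ne.symm hne, stMS_gt (show t2.length < t1.length + 1 by omega),
            stMS_gt (Nat.lt_succ_self t1.length)] at this
      have hab : a = b := by
        have := hst (t1.length + 1)
        rw [show stMS (a :: t1) (t1.length + 1) = {a} by
              simp [stMS, stMS_gt (Nat.lt_succ_self _)],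
            show stMS (b :: t2) (t1.length + 1) = {b} by
              simp [stMS, hlen, stMS_gt (Nat.lt_succ_self t2.length)]] at this
        exact Multiset.singleton_inj.mp this
      have htt : t1 = t2 := by
        apply ih
        intro h
        by_cases hc : h = t1.length + 1
        · subst hc
          rw [stMS_gt (Nat.lt_succ_self _), stMS_gt (by omega : t2.length < t1.length + 1)]
        · have := hst h
          simpa [stMS, hc, hlen ▸ hc] using this
      rw [hab, htt]

lemma exec_inv {σ0 σ : List V} {w : List (SizeStackOp V)}
    (hw : SizeStackExec σ0 w σ) (h : ℕ) :
    stMS σ h + ↑(w.filterMap (popAt h)) = stMS σ0 h + ↑(w.filterMap (pushAt h)) := by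
  induction hw with
  | nil => simp
  | @push σa σb ww v s hs hexec ih =>
    subst hs
    by_cases hc : σa.length + 1 = h
    · simp only [List.filterMap_cons, pushAt, popAt, if_pos hc, ← Multiset.cons_coe,
        ← Multiset.singleton_add]
      rw [show stMS (v :: σa) h = {v} + stMS σa h by simp [stMS, hc.symm]] at ih
      rw [ih]; abel
    · simp only [List.filterMap_cons, pushAt, popAt, if_neg hc]
      rw [show stMS (v :: σa) h = stMS σa h by simp [stMS, if_neg (Ne.symm hc)]] at ih
      exact ih
  | @pop σa σb ww v s hs hexec ih =>
    subst hs
    by_cases hc : σa.length + 1 = h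
    · simp only [List.filterMap_cons, pushAt, popAt, if_pos hc, ← Multiset.cons_coe,
        ← Multiset.singleton_add]
      rw [show stMS (v :: σa) h = {v} + stMS σa h by simp [stMS, hc.symm],
        show stMS σb h + ({v} + ↑(List.filterMap (popAt h) ww)) =
          {v} + (stMS σb h + ↑(List.filterMap (popAt h) ww)) by abel, ih]
      abel
    · simp only [List.filterMap_cons, pushAt, popAt, if_neg hc]
      rw [show stMS (v :: σa) h = stMS σa h by simp [stMS, if_neg (Ne.symm hc)]]
      exact ih

lemma exec_unique_perm {w1 w2 : List (SizeStackOp V)} {σ1 σ2 : List V}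
    (h1 : SizeStackExec [] w1 σ1) (h2 : SizeStackExec [] w2 σ2)
    (hp : w1.Perm w2) : σ1 = σ2 := by
  apply stMS_ext
  intro h
  have e1 := exec_inv h1 h
  have e2 := exec_inv h2 h
  have hpush : (↑(w1.filterMap (pushAt h)) : Multiset V) = ↑(w2.filterMap (pushAt h)) :=
    Multiset.coe_eq_coe.mpr (hp.filterMap _)
  have hpop : (↑(w1.filterMap (popAt h)) : Multiset V) = ↑(w2.filterMap (popAt h)) :=
    Multiset.coe_eq_coe.mpr (hp.filterMap _)
  rw [hpush] at e1
  rw [← e2, hpop] at e1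
  exact add_right_cancel e1

lemma exec_append_iff {σ0 σ2 : List V} {w1 w2 : List (SizeStackOp V)} :
    SizeStackExec σ0 (w1 ++ w2) σ2 ↔
      ∃ σ1, SizeStackExec σ0 w1 σ1 ∧ SizeStackExec σ1 w2 σ2 := by
  constructor
  · intro hex
    induction w1 generalizing σ0 with
    | nil => exact ⟨σ0, SizeStackExec.nil σ0, hex⟩
    | cons op w1 ih =>
      cases hex with
      | push v s hs htail =>
        obtain ⟨σ1, ha, hb⟩ := ih htail
        exact ⟨σ1, SizeStackExec.push v s hs ha, hb⟩
      | pop v s hs htail =>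
        obtain ⟨σ1, ha, hb⟩ := ih htail
        exact ⟨σ1, SizeStackExec.pop v s hs ha, hb⟩
  · rintro ⟨σ1, ha, hb⟩
    induction ha with
    | nil => exact hb
    | push v s hs _ ih => exact SizeStackExec.push v s hs (ih hb)
    | pop v s hs _ ih => exact SizeStackExec.pop v s hs (ih hb)

end Stmt9Aux

theorem stmt9 (V : Type) : AnagramAgnostic (SizeStackSpec V) := by
  have key : ∀ (τ1 τ2 : List (SizeStackOp V)), τ1 ∈ SizeStackSpec V → τ2 ∈ SizeStackSpec V →
      τ1.Perm τ2 → ∀ τ', τ1 ++ τ' ∈ SizeStackSpec V → τ2 ++ τ' ∈ SizeStackSpec V := by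
    rintro τ1 τ2 ⟨σ1, h1⟩ ⟨σ2, h2⟩ hp τ' ⟨σ, hσ⟩
    obtain ⟨σa, ha, hb⟩ := Stmt9Aux.exec_append_iff.mp hσ
    have heq : σa = σ2 := Stmt9Aux.exec_unique_perm ha h2 hp
    exact ⟨σ, Stmt9Aux.exec_append_iff.mpr ⟨σ2, h2, heq ▸ hb⟩⟩
  intro τ1 h1 τ2 h2 hp τ'
  exact ⟨key τ1 τ2 h1 h2 hp τ', key τ2 τ1 h2 h1 hp.symm τ'⟩
end
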